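/- arXiv:1311.3620 — 2 statements merged into one kernel-verified Lean document; each statement's English description precedes it below -/
import Mathlib

section
/- For every f ∈ C^{1,α}([T/2, T]) with α ∈ (0,1] and T > 0, the sup norm of the derivative satisfies ‖f'‖_∞ ≤ 4‖f‖_∞ · max( 2/T, ‖f‖_∞^{-1/(1+α)} · [f']_{C^α}^{1/(1+α)} ), where [f']_{C^α} denotes the α-Hölder seminorm of f' on [T/2, T]. -/
/-! By the mean value theorem, every window `[a, a + h] ⊆ [T/2, T]` containing `t` contains a
point `ξ` with `|f'(ξ)| ≤ 2‖f‖_∞ / h`, and Hölder continuity moves this to `t` at the cost of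
`[f']_{C^α} h^α`. Hence `|f'(t)| h ≤ 2‖f‖_∞ + [f']_{C^α} h^{1+α}` for every `h ≤ T/2`, and the
window `1/h = max(2/T, ‖f‖_∞^{-1/(1+α)} [f']_{C^α}^{1/(1+α)})` makes the last term at most
`‖f‖_∞`, giving `|f'(t)| ≤ 3‖f‖_∞ / h`. -/

open Set

lemma abs_sub_le_mul_rpow_of_mem_upperBounds {g : ℝ → ℝ} {S : Set ℝ} {α H : ℝ}
    (hH : H ∈ upperBounds {y : ℝ | ∃ s ∈ S, ∃ t ∈ S, s ≠ t ∧ y = |g t - g s| / |t - s| ^ α})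
    (hH0 : 0 ≤ H) {s t : ℝ} (hs : s ∈ S) (ht : t ∈ S) :
    |g t - g s| ≤ H * |t - s| ^ α := by
  rcases eq_or_ne s t with rfl | hst
  · simp only [sub_self, abs_zero]
    positivity
  · have hpos : 0 < |t - s| ^ α := Real.rpow_pos_of_pos (abs_pos.2 (sub_ne_zero.2 hst.symm)) α
    rw [← div_le_iff₀ hpos]
    exact hH ⟨s, hs, t, ht, hst, rfl⟩

lemma eq_zero_of_hasDerivAt_of_eqOn_zero {f : ℝ → ℝ} {f₀' c d t : ℝ} (hcd : c < d)
    (ht : t ∈ Icc c d) (hf : HasDerivAt f f₀' t) (h0 : EqOn f 0 (Icc c d)) : f₀' = 0 :=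
  (uniqueDiffOn_Icc hcd t ht).eq_deriv _ hf.hasDerivWithinAt
    ((hasDerivWithinAt_const t _ 0).congr h0 (h0 ht))

lemma abs_mul_le_of_hasDerivAt_of_holder {f f' : ℝ → ℝ} {c d M H α h t : ℝ}
    (hderiv : ∀ x ∈ Icc c d, HasDerivAt f (f' x) x) (hf : ∀ x ∈ Icc c d, |f x| ≤ M)
    (hf' : ∀ x ∈ Icc c d, ∀ y ∈ Icc c d, |f' x - f' y| ≤ H * |x - y| ^ α)
    (hH : 0 ≤ H) (hα : 0 ≤ α) (hh : 0 < h) (hhcd : h ≤ d - c) (ht : t ∈ Icc c d) :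
    |f' t| * h ≤ 2 * M + H * h ^ (1 + α) := by
  set a := min t (d - h)
  have ha : a ∈ Icc c d := ⟨le_min ht.1 (by linarith), (min_le_left _ _).trans ht.2⟩
  have hb : a + h ∈ Icc c d := ⟨by linarith [ha.1], by linarith [min_le_right t (d - h)]⟩
  have hta : a ≤ t := min_le_left _ _
  have htb : t ≤ a + h := by
    rcases min_cases t (d - h) with ⟨h', -⟩ | ⟨h', -⟩ <;> linarith [ht.2]
  have hsub : Icc a (a + h) ⊆ Icc c d := Icc_subset_Icc ha.1 hb.2
  obtain ⟨ξ, hξ, hslope⟩ := exists_hasDerivAt_eq_slope f f' (by linarith : a < a + h)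
    (fun x hx => (hderiv x (hsub hx)).continuousAt.continuousWithinAt)
    (fun x hx => hderiv x (hsub (Ioo_subset_Icc_self hx)))
  have hξ_mem : ξ ∈ Icc c d := hsub (Ioo_subset_Icc_self hξ)
  have hslope_le : |f' ξ| * h ≤ 2 * M := by
    rw [hslope, add_sub_cancel_left, abs_div, abs_of_pos hh, div_mul_cancel₀ _ hh.ne']
    linarith [abs_sub (f (a + h)) (f a), hf _ hb, hf _ ha]
  have hholder : |f' t - f' ξ| ≤ H * h ^ α := by
    have hdist : |t - ξ| ≤ h := abs_sub_le_iff.2 ⟨by linarith [hξ.1], by linarith [hξ.2]⟩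
    exact (hf' t ht ξ hξ_mem).trans
      (mul_le_mul_of_nonneg_left (Real.rpow_le_rpow (abs_nonneg _) hdist hα) hH)
  calc |f' t| * h ≤ (|f' ξ| + |f' t - f' ξ|) * h := by
        gcongr
        linarith [abs_sub_abs_le_abs_sub (f' t) (f' ξ)]
    _ ≤ 2 * M + H * h ^ α * h := by nlinarith
    _ = 2 * M + H * h ^ (1 + α) := by
        rw [Real.rpow_add hh, Real.rpow_one]
        ring

lemma mul_inv_max_rpow_le {M H q a : ℝ} (hM : 0 < M) (hH : 0 ≤ H) (hq : 0 < q) (ha : 0 < a) :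
    H * (max a (M ^ (-(1 / q)) * H ^ (1 / q)))⁻¹ ^ q ≤ M := by
  rcases hH.eq_or_lt with rfl | hH
  · simpa using hM.le
  have hscale : (M ^ (-(1 / q)) * H ^ (1 / q))⁻¹ = (M / H) ^ (1 / q) := by
    rw [Real.div_rpow hM.le hH.le, Real.rpow_neg hM.le, mul_inv, inv_inv, ← div_eq_mul_inv]
  have hle : (max a (M ^ (-(1 / q)) * H ^ (1 / q)))⁻¹ ≤ (M / H) ^ (1 / q) :=
    hscale ▸ inv_anti₀ (by positivity) (le_max_right _ _)
  calc H * (max a (M ^ (-(1 / q)) * H ^ (1 / q)))⁻¹ ^ q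
      ≤ H * ((M / H) ^ (1 / q)) ^ q := by gcongr
    _ = M := by
        rw [← Real.rpow_mul (by positivity), one_div_mul_cancel hq.ne', Real.rpow_one]
        field_simp

/-- interpolation inequality
`‖f'‖_∞ ≤ 4‖f‖_∞ max(2/T, ‖f‖_∞^{-1/(1+α)} [f']_{C^α}^{1/(1+α)})` on `[T/2, T]`. -/
theorem stmt2 (T α : ℝ) (hT : 0 < T) (hα : α ∈ Set.Ioc (0:ℝ) 1)
    (f f' : ℝ → ℝ)
    (hderiv : ∀ t ∈ Set.Icc (T/2) T, HasDerivAt f (f' t) t)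
    (Mf Mf' Hα : ℝ)
    (hMf : IsLUB {y : ℝ | ∃ t ∈ Set.Icc (T/2) T, y = |f t|} Mf)
    (hMf' : IsLUB {y : ℝ | ∃ t ∈ Set.Icc (T/2) T, y = |f' t|} Mf')
    (hHα : IsLUB {y : ℝ | ∃ s ∈ Set.Icc (T/2) T, ∃ t ∈ Set.Icc (T/2) T,
        s ≠ t ∧ y = |f' t - f' s| / |t - s| ^ α} Hα) :
    Mf' ≤ 4 * Mf * max (2 / T) (Mf ^ (-(1 / (1 + α))) * Hα ^ (1 / (1 + α))) := by
  have hT2 : T / 2 < T := by linarith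
  have hf : ∀ t ∈ Icc (T/2) T, |f t| ≤ Mf := fun t ht => hMf.1 ⟨t, ht, rfl⟩
  have hMf0 : 0 ≤ Mf := (abs_nonneg _).trans (hf T ⟨hT2.le, le_rfl⟩)
  have hHα0 : 0 ≤ Hα := (by positivity : (0:ℝ) ≤ _).trans
    (hHα.1 ⟨T/2, ⟨le_rfl, hT2.le⟩, T, ⟨hT2.le, le_rfl⟩, hT2.ne, rfl⟩)
  have hf' : ∀ x ∈ Icc (T/2) T, ∀ y ∈ Icc (T/2) T, |f' x - f' y| ≤ Hα * |x - y| ^ α :=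
    fun x hx y hy => abs_sub_le_mul_rpow_of_mem_upperBounds hHα.1 hHα0 hy hx
  refine hMf'.2 ?_
  rintro _ ⟨t, ht, rfl⟩
  rcases hMf0.eq_or_lt with hM | hM
  · have hf0 : EqOn f 0 (Icc (T/2) T) := fun x hx => abs_nonpos_iff.1 (hM ▸ hf x hx)
    simp [← hM, eq_zero_of_hasDerivAt_of_eqOn_zero hT2 ht (hderiv t ht) hf0]
  set m := max (2 / T) (Mf ^ (-(1 / (1 + α))) * Hα ^ (1 / (1 + α)))
  have hm : 0 < m := lt_max_of_lt_left (by positivity)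
  have hwindow : m⁻¹ ≤ T - T / 2 := by
    have h : m⁻¹ ≤ (2 / T)⁻¹ := inv_anti₀ (by positivity) (le_max_left _ _)
    rw [inv_div] at h
    linarith
  have hest := abs_mul_le_of_hasDerivAt_of_holder hderiv hf hf' hHα0 hα.1.le
    (inv_pos.2 hm) hwindow ht
  have hsmall := mul_inv_max_rpow_le hM hHα0 (by linarith [hα.1] : 0 < 1 + α)
    (by positivity : 0 < 2 / T)
  calc |f' t| ≤ 3 * Mf * m := (mul_inv_le_iff₀ hm).1 (by linarith)
    _ ≤ 4 * Mf * m := by gcongr; norm_num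
end

section
/- Let (Ω, F, P) be a probability space, T > 0, α ∈ (0,1], and let {g_φ}_{φ∈I} be a family of random functions in C^{1,α}([T/2,T]) indexed by a set I. For ε > 0 define Λ_ε = ∪_{φ∈I} { sup_{[T/2,T]} |g_φ| ≤ ε and sup_{[T/2,T]} |g_φ'| > ε^{α/(2(1+α))} }. Then there is ε₀ = ε₀(α,T) > 0 and a constant C = C(α) such that for all ε ∈ (0, ε₀): P(Λ_ε) ≤ C ε · E[ sup_{φ∈I} ‖g_φ‖_{C^{1,α}}^{2/α} ] (assuming sup_{φ∈I} ‖g_φ‖_{C^{1,α}}^{2/α} is measurable with finite expectation). -/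
/-!
If `|f| ≤ ε` on an interval and `f'` is `α`-Hölder with constant `N`, then comparing `f` with its
tangent line at `t₀` over a step `h` gives `|f'(t₀)| h ≤ N h^{1+α} + 2ε`. Taking `h = 4ε/M`, where
`M = ε^{α/(2(1+α))} < |f'(t₀)|`, forces `M^{1+α} ≤ 2N(4ε)^α`, i.e. `N^{2/α} ≥ C(α)⁻¹ ε⁻¹`; the step
fits in the interval once `ε` is small. Markov's inequality applied to the dominating function `G`
then bounds the probability of the bad event by `C(α) ε E[G]`.
-/

open MeasureTheory

theorem abs_sub_sub_mul_le_of_holder {s : Set ℝ} (hs : s.OrdConnected) {f f' : ℝ → ℝ}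
    (hf : ∀ t ∈ s, HasDerivAt f (f' t) t) {N α : ℝ} (hN : 0 ≤ N) (hα : 0 ≤ α)
    (hf' : ∀ x ∈ s, ∀ y ∈ s, |f' y - f' x| ≤ N * |y - x| ^ α) {x y : ℝ} (hx : x ∈ s)
    (hy : y ∈ s) : |f y - f x - f' x * (y - x)| ≤ N * |y - x| ^ α * |y - x| := by
  have hsub : Set.uIcc x y ⊆ s := hs.uIcc_subset hx hy
  have hderiv : ∀ t ∈ Set.uIcc x y,
      HasDerivWithinAt (fun u => f u - f' x * u) (f' t - f' x) (Set.uIcc x y) t := fun t ht =>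
    ((hf t (hsub ht)).sub ((hasDerivAt_id t).const_mul (f' x))).hasDerivWithinAt.congr_deriv
      (by simp)
  have hbound : ∀ t ∈ Set.uIcc x y, ‖f' t - f' x‖ ≤ N * |y - x| ^ α := fun t ht =>
    (hf' x hx t (hsub ht)).trans <| mul_le_mul_of_nonneg_left
      (Real.rpow_le_rpow (abs_nonneg _) (Set.abs_sub_left_of_mem_uIcc ht) hα) hN
  have := (convex_uIcc x y).norm_image_sub_le_of_norm_hasDerivWithin_le hderiv hbound
    Set.left_mem_uIcc Set.right_mem_uIcc
  simp only [Real.norm_eq_abs] at this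
  convert this using 2
  ring

theorem exists_mem_Icc_abs_sub_eq {a b t h : ℝ} (ht : t ∈ Set.Icc a b) (hh : 0 ≤ h)
    (hab : 2 * h ≤ b - a) : ∃ u ∈ Set.Icc a b, |u - t| = h := by
  rcases le_or_gt (t + h) b with htb | htb
  · exact ⟨t + h, ⟨by linarith [ht.1], htb⟩, by simp [abs_of_nonneg hh]⟩
  · exact ⟨t - h, ⟨by linarith, by linarith [ht.2]⟩, by simp [abs_of_nonneg hh]⟩

theorem rpow_one_add_le_of_abs_le_of_holder {a b : ℝ} {f f' : ℝ → ℝ}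
    (hf : ∀ t ∈ Set.Icc a b, HasDerivAt f (f' t) t) {N α ε M t₀ : ℝ} (hN : 0 ≤ N) (hα : 0 ≤ α)
    (hf' : ∀ x ∈ Set.Icc a b, ∀ y ∈ Set.Icc a b, |f' y - f' x| ≤ N * |y - x| ^ α)
    (hfε : ∀ t ∈ Set.Icc a b, |f t| ≤ ε) (ht₀ : t₀ ∈ Set.Icc a b) (hM : 0 < M)
    (hMt₀ : M ≤ |f' t₀|) (hε : 0 < ε) (hab : 8 * ε ≤ M * (b - a)) :
    M ^ (1 + α) ≤ 2 * N * (4 * ε) ^ α := by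
  set h := 4 * ε / M with hh
  have hh0 : 0 < h := by positivity
  obtain ⟨t₁, ht₁, hdist⟩ := exists_mem_Icc_abs_sub_eq ht₀ hh0.le <| by
    rw [hh, mul_div_assoc', div_le_iff₀ hM]; linarith
  have htaylor := abs_sub_sub_mul_le_of_holder Set.ordConnected_Icc hf hN hα hf' ht₀ ht₁
  rw [hdist] at htaylor
  have hlin : M * h ≤ N * h ^ α * h + 2 * ε :=
    calc M * h ≤ |f' t₀ * (t₁ - t₀)| := by rw [abs_mul, hdist]; gcongr
      _ = |(f t₁ - f t₀) - (f t₁ - f t₀ - f' t₀ * (t₁ - t₀))| := by rw [sub_sub_cancel]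
      _ ≤ |f t₁ - f t₀| + |f t₁ - f t₀ - f' t₀ * (t₁ - t₀)| := abs_sub _ _
      _ ≤ (|f t₁| + |f t₀|) + N * h ^ α * h := add_le_add (abs_sub _ _) htaylor
      _ ≤ N * h ^ α * h + 2 * ε := by linarith [hfε t₀ ht₀, hfε t₁ ht₁]
  have hMh : M * h = 4 * ε := by rw [hh]; field_simp
  have hhalf : M ≤ 2 * N * h ^ α :=
    le_of_mul_le_mul_right (by linarith) hh0
  calc M ^ (1 + α) = M * M ^ α := by rw [Real.rpow_add hM, Real.rpow_one]
    _ ≤ 2 * N * h ^ α * M ^ α := by gcongr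
    _ = 2 * N * (4 * ε) ^ α := by
      rw [mul_assoc, ← Real.mul_rpow hh0.le hM.le, mul_comm h, hMh]

theorem inv_le_mul_rpow_of_abs_le_of_holder {a b : ℝ} {f f' : ℝ → ℝ}
    (hf : ∀ t ∈ Set.Icc a b, HasDerivAt f (f' t) t) {N α ε t₀ : ℝ} (hN : 0 ≤ N) (hα : 0 < α)
    (hf' : ∀ x ∈ Set.Icc a b, ∀ y ∈ Set.Icc a b, |f' y - f' x| ≤ N * |y - x| ^ α)
    (hfε : ∀ t ∈ Set.Icc a b, |f t| ≤ ε) (ht₀ : t₀ ∈ Set.Icc a b)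
    (hMt₀ : ε ^ (α / (2 * (1 + α))) ≤ |f' t₀|) (hε : 0 < ε)
    (hab : 8 * ε ^ ((2 + α) / (2 * (1 + α))) ≤ b - a) :
    ε⁻¹ ≤ (2 * 4 ^ α) ^ (2 / α) * N ^ (2 / α) := by
  set M := ε ^ (α / (2 * (1 + α)))
  have hM : 0 < M := by positivity
  have hεM : ε = ε ^ ((2 + α) / (2 * (1 + α))) * M := by
    rw [← Real.rpow_add hε, ← add_div, show 2 + α + α = 2 * (1 + α) by ring,
      div_self (by positivity), Real.rpow_one]
  have hMα : M ^ (1 + α) = ε ^ (α / 2) := by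
    rw [← Real.rpow_mul hε.le]
    field_simp
  have key := rpow_one_add_le_of_abs_le_of_holder hf hN hα.le hf' hfε ht₀ hM hMt₀ hε <| by
    rw [hεM]; nlinarith
  rw [hMα, Real.mul_rpow (by norm_num) hε.le] at key
  have hneg : ε ^ (-(α / 2)) ≤ 2 * 4 ^ α * N := by
    rw [show -(α / 2) = α / 2 - α by ring, Real.rpow_sub hε, div_le_iff₀ (by positivity)]
    linarith
  calc ε⁻¹ = (ε ^ (-(α / 2))) ^ (2 / α) := by
        rw [← Real.rpow_mul hε.le, show -(α / 2) * (2 / α) = -1 by field_simp,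
          Real.rpow_neg_one]
    _ ≤ (2 * 4 ^ α * N) ^ (2 / α) := by gcongr
    _ = (2 * 4 ^ α) ^ (2 / α) * N ^ (2 / α) := Real.mul_rpow (by positivity) hN

theorem measure_inv_le_mul_le_ofReal_mul_integral {Ω : Type*} [MeasurableSpace Ω]
    {μ : Measure Ω} [IsFiniteMeasure μ] {G : Ω → ℝ} (hG : 0 ≤ G) (hGint : Integrable G μ)
    {K ε : ℝ} (hK : 0 ≤ K) (hε : 0 < ε) :
    μ {ω | ε⁻¹ ≤ K * G ω} ≤ ENNReal.ofReal (K * ε * ∫ ω, G ω ∂μ) := by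
  have hmarkov := mul_meas_ge_le_integral_of_nonneg
    (ae_of_all μ fun ω => mul_nonneg hK (hG ω)) (hGint.const_mul K) ε⁻¹
  rw [integral_const_mul, inv_mul_le_iff₀ hε] at hmarkov
  rw [← ofReal_measureReal]
  exact ENNReal.ofReal_le_ofReal (by linarith)

/-- probabilistic bound on the "bad set" `Λ_ε` for a family of random
`C^{1,α}` functions: `P(Λ_ε) ≤ C ε E[sup_φ ‖g_φ‖_{C^{1,α}}^{2/α}]` for small `ε`,
where the expectation of the supremum is represented by any integrable dominating
function `G`. -/
theorem stmt10 {Ω : Type*} [MeasurableSpace Ω] (P : Measure Ω) [IsProbabilityMeasure P]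
    {I : Type*} (T α : ℝ) (hT : 0 < T) (hα : α ∈ Set.Ioc (0:ℝ) 1)
    (g g' : I → Ω → ℝ → ℝ)
    (hderiv : ∀ i ω, ∀ t ∈ Set.Icc (T/2) T, HasDerivAt (g i ω) (g' i ω t) t)
    (Nrm : I → Ω → ℝ)
    (hNrm : ∀ i ω,
      (∀ t ∈ Set.Icc (T/2) T, |g i ω t| ≤ Nrm i ω) ∧
      (∀ t ∈ Set.Icc (T/2) T, |g' i ω t| ≤ Nrm i ω) ∧
      (∀ s ∈ Set.Icc (T/2) T, ∀ t ∈ Set.Icc (T/2) T,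
        |g' i ω t - g' i ω s| ≤ Nrm i ω * |t - s| ^ α)) :
    ∃ ε₀ > (0:ℝ), ∃ C > (0:ℝ), ∀ ε ∈ Set.Ioo (0:ℝ) ε₀,
      ∀ G : Ω → ℝ, Measurable G → Integrable G P →
        (∀ i ω, Nrm i ω ^ (2 / α) ≤ G ω) →
        P (⋃ i : I, {ω | (∀ t ∈ Set.Icc (T/2) T, |g i ω t| ≤ ε) ∧
            (∃ t ∈ Set.Icc (T/2) T, ε ^ (α / (2 * (1 + α))) < |g' i ω t|)})
          ≤ ENNReal.ofReal (C * ε * ∫ ω, G ω ∂P) := by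
  obtain ⟨hα0, -⟩ := hα
  set β : ℝ := (2 + α) / (2 * (1 + α))
  set K : ℝ := (2 * 4 ^ α) ^ (2 / α)
  refine ⟨(T / 16) ^ β⁻¹, by positivity, K, by positivity, ?_⟩
  rintro ε ⟨hε, hεε₀⟩ G - hGint hGdom
  have hsmall : 8 * ε ^ β ≤ T - T / 2 := by
    have := (Real.lt_rpow_inv_iff_of_pos hε.le (by positivity) (by positivity)).1 hεε₀
    linarith
  rcases isEmpty_or_nonempty I with _ | ⟨⟨i⟩⟩
  · simp
  have hN : ∀ i ω, 0 ≤ Nrm i ω := fun i ω =>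
    (abs_nonneg _).trans ((hNrm i ω).1 T ⟨by linarith, le_rfl⟩)
  have hG : 0 ≤ G := fun ω => (Real.rpow_nonneg (hN i ω) _).trans (hGdom i ω)
  refine (measure_mono ?_).trans
    (measure_inv_le_mul_le_ofReal_mul_integral hG hGint (by positivity) hε)
  simp only [Set.iUnion_subset_iff]
  rintro i ω ⟨hgε, t₀, ht₀, hg't₀⟩
  calc ε⁻¹ ≤ K * Nrm i ω ^ (2 / α) :=
        inv_le_mul_rpow_of_abs_le_of_holder (hderiv i ω) (hN i ω) hα0 (hNrm i ω).2.2 hgε ht₀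
          hg't₀.le hε hsmall
    _ ≤ K * G ω := by gcongr; exact hGdom i ω
end
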